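/- arXiv:2511.22283 — 5 statements merged into one kernel-verified Lean document; each statement's English description precedes it below -/
import Mathlib

section
/- Let K ⊆ ℝ^d be a convex set with diameter D = max_{x,y∈K} ‖x−y‖ with respect to a norm ‖·‖, and let R : K → ℝ be differentiable, 1-strongly convex with respect to ‖·‖, and β-smooth (i.e., ‖∇R(x) − ∇R(y)‖_* ≤ β‖x−y‖ for all x,y ∈ K, where ‖·‖_* is the dual norm). Fix η > 0, loss vectors ℓ_1,…,ℓ_T ∈ [−1,1]^d, and let w_1,…,w_{T+1} be an ε-approximate OMD trajectory with ε ≤ D²/2. Then for every w ∈ K, Regret(w) ≤ (1/η)·D_R(w‖w_1) + (η/2)·Σ_{t=1}^T ‖ℓ_t‖_*² + T·D·√(2βε)/η. -/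
open Finset

noncomputable section

/-- Euclidean pairing on `ℝ^d`. -/
def dot {d : ℕ} (v w : Fin d → ℝ) : ℝ := ∑ i, v i * w i

/-- The continuous linear map `u ↦ ⟨v, u⟩`. -/
def dotCLM {d : ℕ} (v : Fin d → ℝ) : (Fin d → ℝ) →L[ℝ] ℝ :=
  ∑ i, v i • (ContinuousLinearMap.proj i : (Fin d → ℝ) →L[ℝ] ℝ)

/-- Bregman divergence `D_R(w ‖ w')` of `R` with gradient map `gradR`. -/
def breg {d : ℕ} (R : (Fin d → ℝ) → ℝ) (gradR : (Fin d → ℝ) → Fin d → ℝ)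
    (w w' : Fin d → ℝ) : ℝ :=
  R w - R w' - dot (gradR w') (w - w')

/-! ### Auxiliary lemmas -/

lemma OMD.dot_add_right {d : ℕ} (v a b : Fin d → ℝ) : dot v (a + b) = dot v a + dot v b := by
  simp [dot, mul_add, Finset.sum_add_distrib]
lemma OMD.dot_sub_right {d : ℕ} (v a b : Fin d → ℝ) : dot v (a - b) = dot v a - dot v b := by
  simp [dot, mul_sub, Finset.sum_sub_distrib]
lemma OMD.dot_smul_right {d : ℕ} (c : ℝ) (v z : Fin d → ℝ) : dot v (c • z) = c * dot v z := by
  simp [dot, Finset.mul_sum]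
  exact Finset.sum_congr rfl (fun i _ => by ring)
lemma OMD.dot_add_left {d : ℕ} (a b z : Fin d → ℝ) : dot (a + b) z = dot a z + dot b z := by
  simp [dot, add_mul, Finset.sum_add_distrib]
lemma OMD.dot_sub_left {d : ℕ} (a b z : Fin d → ℝ) : dot (a - b) z = dot a z - dot b z := by
  simp [dot, sub_mul, Finset.sum_sub_distrib]
lemma OMD.dot_smul_left {d : ℕ} (c : ℝ) (a z : Fin d → ℝ) : dot (c • a) z = c * dot a z := by
  simp [dot, Finset.mul_sum]
  exact Finset.sum_congr rfl (fun i _ => by ring)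

lemma OMD.dotCLM_apply {d : ℕ} (v u : Fin d → ℝ) : dotCLM v u = dot v u := by
  simp [dotCLM, dot, ContinuousLinearMap.sum_apply, ContinuousLinearMap.smul_apply,
    ContinuousLinearMap.proj_apply, smul_eq_mul]

section NormFacts
variable {d : ℕ} (N : (Fin d → ℝ) → ℝ)
  (hN0 : ∀ x, N x = 0 ↔ x = 0)
  (hNadd : ∀ x y, N (x + y) ≤ N x + N y)
  (hNsmul : ∀ (c : ℝ) x, N (c • x) = |c| * N x)

include hN0 hNsmul in
lemma OMD.N_zero : N 0 = 0 := (hN0 0).2 rfl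

include hN0 hNadd hNsmul in
lemma OMD.N_nonneg : ∀ x, 0 ≤ N x := by
  intro x
  have h1 : N (x + (-1:ℝ) • x) ≤ N x + N ((-1:ℝ) • x) := hNadd x _
  rw [hNsmul] at h1
  simp at h1
  have : N 0 = 0 := (hN0 0).2 rfl
  nlinarith [h1, this]

include hNsmul in
lemma OMD.N_symm : ∀ x y, N (x - y) = N (y - x) := by
  intro x y
  have : x - y = (-1:ℝ) • (y - x) := by module
  rw [this, hNsmul]; simp

include hN0 hNadd hNsmul in
lemma OMD.N_sum_le : ∀ (s : Finset (Fin d)) (g : Fin d → (Fin d → ℝ)),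
    N (∑ i ∈ s, g i) ≤ ∑ i ∈ s, N (g i) := by
  intro s
  induction s using Finset.cons_induction with
  | empty => intro g; simp [OMD.N_zero N hN0 hNsmul]
  | cons a s ha ih =>
    intro g
    rw [Finset.sum_cons, Finset.sum_cons]
    exact le_trans (hNadd _ _) (by linarith [ih g])

include hN0 hNadd hNsmul in
lemma OMD.N_le_C : ∀ x, N x ≤ (∑ i, N (Pi.single i (1:ℝ))) * ‖x‖ := by
  intro x
  set e : Fin d → (Fin d → ℝ) := fun i => Pi.single i (1:ℝ) with he
  have hx : x = ∑ i, (x i) • e i := by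
    funext j
    simp [he, Pi.single_apply, Finset.sum_apply, mul_ite]
  calc N x = N (∑ i, (x i) • e i) := by rw [← hx]
    _ ≤ ∑ i, N ((x i) • e i) := OMD.N_sum_le N hN0 hNadd hNsmul _ _
    _ = ∑ i, |x i| * N (e i) := by simp only [hNsmul]
    _ ≤ ∑ i, ‖x‖ * N (e i) := by
        apply Finset.sum_le_sum
        intro i _
        have h1 : |x i| ≤ ‖x‖ := by
          have := norm_le_pi_norm x i
          simpa [Real.norm_eq_abs] using this
        exact mul_le_mul_of_nonneg_right h1 (OMD.N_nonneg N hN0 hNadd hNsmul _)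
    _ = (∑ i, N (e i)) * ‖x‖ := by
        rw [Finset.sum_mul]; exact Finset.sum_congr rfl (fun i _ => by ring)

include hN0 hNadd hNsmul in
lemma OMD.N_continuous : Continuous N := by
  set C := ∑ i, N (Pi.single i (1:ℝ)) with hC
  have hC0 : 0 ≤ C := Finset.sum_nonneg fun i _ => OMD.N_nonneg N hN0 hNadd hNsmul _
  apply (LipschitzWith.of_dist_le_mul (K := C.toNNReal) (f := N) ?_).continuous
  intro x y
  have h1 : N x - N y ≤ N (x - y) := by
    have := hNadd (x - y) y; simp at this; linarith
  have h2 : N y - N x ≤ N (x - y) := by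
    have := hNadd (y - x) x; simp at this
    rw [OMD.N_symm N hNsmul] at this; linarith
  have h3 : N (x - y) ≤ C * ‖x - y‖ := OMD.N_le_C N hN0 hNadd hNsmul _
  rw [Real.dist_eq, abs_sub_le_iff]
  rw [dist_eq_norm]
  constructor <;> [skip; skip] <;>
    · simp only [Real.coe_toNNReal _ hC0]
      linarith

include hN0 hNadd hNsmul in
lemma OMD.N_lower : ∃ c : ℝ, 0 < c ∧ ∀ x, c * ‖x‖ ≤ N x := by
  by_cases hd : ∃ z : Fin d → ℝ, z ≠ 0
  · obtain ⟨z, hz⟩ := hd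
    haveI : Nontrivial (Fin d → ℝ) := ⟨⟨z, 0, hz⟩⟩
    have hsne : (Metric.sphere (0 : Fin d → ℝ) 1).Nonempty :=
      NormedSpace.sphere_nonempty.mpr (by norm_num)
    obtain ⟨m, hm, hmin⟩ := (isCompact_sphere (0 : Fin d → ℝ) 1).exists_isMinOn hsne
      (OMD.N_continuous N hN0 hNadd hNsmul).continuousOn
    have hmnorm : ‖m‖ = 1 := by simpa using hm
    have hm0 : m ≠ 0 := by intro h; rw [h] at hmnorm; simp at hmnorm
    have hc : 0 < N m := by
      rcases lt_or_eq_of_le (OMD.N_nonneg N hN0 hNadd hNsmul m) with h | h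
      · exact h
      · exact absurd ((hN0 m).1 h.symm) hm0
    refine ⟨N m, hc, fun x => ?_⟩
    by_cases hx : x = 0
    · simp [hx, OMD.N_zero N hN0 hNsmul]
    · have hnx : 0 < ‖x‖ := norm_pos_iff.mpr hx
      have hmem : ‖x‖⁻¹ • x ∈ Metric.sphere (0 : Fin d → ℝ) 1 := by
        simp [norm_smul, abs_of_pos (inv_pos.mpr hnx), inv_mul_cancel₀ (ne_of_gt hnx)]
      have h5 : N m ≤ N (‖x‖⁻¹ • x) := hmin hmem
      have hNs : N (‖x‖⁻¹ • x) = ‖x‖⁻¹ * N x := by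
        rw [hNsmul]; rw [abs_of_pos (inv_pos.mpr hnx)]
      rw [hNs] at h5
      calc N m * ‖x‖ ≤ (‖x‖⁻¹ * N x) * ‖x‖ := by
            exact mul_le_mul_of_nonneg_right h5 (le_of_lt hnx)
        _ = N x := by field_simp
  · push_neg at hd
    refine ⟨1, one_pos, fun x => ?_⟩
    rw [hd x]
    simp [OMD.N_zero N hN0 hNsmul]

include hN0 hNadd hNsmul in
lemma OMD.pairing (Nstar : (Fin d → ℝ) → ℝ)
    (hNstar : ∀ v, Nstar v = sSup {r : ℝ | ∃ u, N u ≤ 1 ∧ r = dot v u}) :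
    ∀ v z, dot v z ≤ Nstar v * N z := by
  intro v z
  by_cases hz : z = 0
  · simp [hz, dot, OMD.N_zero N hN0 hNsmul]
  · have hNz : 0 < N z := by
      rcases lt_or_eq_of_le (OMD.N_nonneg N hN0 hNadd hNsmul z) with h | h
      · exact h
      · exact absurd ((hN0 z).1 h.symm) hz
    obtain ⟨c, hc, hlow⟩ := OMD.N_lower N hN0 hNadd hNsmul
    have hbdd : BddAbove {r : ℝ | ∃ u, N u ≤ 1 ∧ r = dot v u} := by
      refine ⟨(∑ i, |v i|) * c⁻¹, fun r hr => ?_⟩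
      obtain ⟨u, hu, rfl⟩ := hr
      have hun : ‖u‖ ≤ c⁻¹ := by
        have h := le_trans (hlow u) hu
        rw [show c⁻¹ = 1/c by ring, le_div_iff₀ hc]
        nlinarith
      calc dot v u ≤ ∑ i, |v i| * |u i| := by
            apply Finset.sum_le_sum; intro i _
            calc v i * u i ≤ |v i * u i| := le_abs_self _
              _ = |v i| * |u i| := abs_mul _ _
        _ ≤ ∑ i, |v i| * c⁻¹ := by
            apply Finset.sum_le_sum; intro i _
            apply mul_le_mul_of_nonneg_left _ (abs_nonneg _)
            calc |u i| ≤ ‖u‖ := by simpa [Real.norm_eq_abs] using norm_le_pi_norm u i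
              _ ≤ c⁻¹ := hun
        _ = (∑ i, |v i|) * c⁻¹ := by rw [← Finset.sum_mul]
    have hmem : (N z)⁻¹ * dot v z ∈ {r : ℝ | ∃ u, N u ≤ 1 ∧ r = dot v u} := by
      refine ⟨(N z)⁻¹ • z, ?_, ?_⟩
      · rw [hNsmul, abs_of_pos (inv_pos.mpr hNz), inv_mul_cancel₀ (ne_of_gt hNz)]
      · rw [OMD.dot_smul_right]
    have hle := le_csSup hbdd hmem
    rw [← hNstar] at hle
    calc dot v z = ((N z)⁻¹ * dot v z) * N z := by field_simp
      _ ≤ Nstar v * N z := mul_le_mul_of_nonneg_right hle (le_of_lt hNz)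
end NormFacts

/-- Descent lemma: β-smoothness implies a quadratic upper bound on the Bregman divergence. -/
lemma OMD.descent {d : ℕ} (K : Set (Fin d → ℝ)) (hK : Convex ℝ K)
    (N Nstar : (Fin d → ℝ) → ℝ)
    (hNs : ∀ (c : ℝ) x, N (c • x) = |c| * N x)
    (hNn : ∀ x, 0 ≤ N x)
    (hpair : ∀ v z, dot v z ≤ Nstar v * N z)
    (R : (Fin d → ℝ) → ℝ) (gradR : (Fin d → ℝ) → Fin d → ℝ)
    (hdiff : ∀ x ∈ K, HasFDerivAt R (dotCLM (gradR x)) x)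
    (β : ℝ)
    (hsmooth : ∀ x ∈ K, ∀ y ∈ K, Nstar (gradR x - gradR y) ≤ β * N (x - y)) :
    ∀ x ∈ K, ∀ y ∈ K, breg R gradR x y ≤ β/2 * (N (x - y))^2 := by
  intro x hx y hy
  set p : ℝ → (Fin d → ℝ) := fun t => y + t • (x - y) with hp
  have hpK : ∀ t ∈ Set.Icc (0:ℝ) 1, p t ∈ K := by
    intro t ht
    have : p t = (1 - t) • y + t • x := by simp only [hp]; module
    rw [this]
    exact hK hy hx (by linarith [ht.2]) ht.1 (by ring)
  set f : ℝ → ℝ := fun t =>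
    R (p t) - t * dot (gradR y) (x - y) - β/2 * t^2 * (N (x - y))^2 with hf
  have hder : ∀ t ∈ Set.Icc (0:ℝ) 1, HasDerivAt f
      (dot (gradR (p t)) (x - y) - dot (gradR y) (x - y) - β * t * (N (x - y))^2) t := by
    intro t ht
    have hline : HasDerivAt p (x - y) t := by
      have h1 : HasDerivAt (fun s : ℝ => s • (x - y)) ((1:ℝ) • (x - y)) t :=
        (hasDerivAt_id t).smul_const (x - y)
      simpa [hp, one_smul] using h1.const_add y
    have hR : HasDerivAt (fun s => R (p s)) (dotCLM (gradR (p t)) (x - y)) t :=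
      (hdiff (p t) (hpK t ht)).comp_hasDerivAt t hline
    rw [OMD.dotCLM_apply] at hR
    have h2 : HasDerivAt (fun s : ℝ => s * dot (gradR y) (x - y))
        (dot (gradR y) (x - y)) t := by
      simpa using (hasDerivAt_id t).mul_const (dot (gradR y) (x - y))
    have h3 : HasDerivAt (fun s : ℝ => β/2 * s^2 * (N (x - y))^2)
        (β * t * (N (x - y))^2) t := by
      have h := ((hasDerivAt_pow 2 t).const_mul (β/2)).mul_const ((N (x - y))^2)
      refine h.congr_deriv ?_
      push_cast; ring
    exact (hR.sub h2).sub h3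
  have hanti : AntitoneOn f (Set.Icc (0:ℝ) 1) := by
    apply antitoneOn_of_deriv_nonpos (convex_Icc 0 1)
    · intro t ht
      exact (hder t ht).continuousAt.continuousWithinAt
    · intro t ht
      rw [interior_Icc] at ht
      exact (hder t (Set.mem_Icc_of_Ioo ht)).differentiableAt.differentiableWithinAt
    · intro t ht
      rw [interior_Icc] at ht
      rw [(hder t (Set.mem_Icc_of_Ioo ht)).deriv]
      have hptK := hpK t (Set.mem_Icc_of_Ioo ht)
      have h1 : dot (gradR (p t) - gradR y) (x - y)
          ≤ Nstar (gradR (p t) - gradR y) * N (x - y) := hpair _ _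
      have h2 : Nstar (gradR (p t) - gradR y) ≤ β * N (p t - y) := hsmooth _ hptK _ hy
      have h3 : N (p t - y) = t * N (x - y) := by
        have : p t - y = t • (x - y) := by simp only [hp]; module
        rw [this, hNs, abs_of_pos ht.1]
      rw [h3] at h2
      have h4 : Nstar (gradR (p t) - gradR y) * N (x - y) ≤ (β * (t * N (x - y))) * N (x - y) :=
        mul_le_mul_of_nonneg_right h2 (hNn _)
      rw [OMD.dot_sub_left] at h1
      nlinarith [h1, h4]
  have h01 : f 1 ≤ f 0 := hanti (Set.mem_Icc.mpr ⟨le_refl 0, zero_le_one⟩)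
    (Set.mem_Icc.mpr ⟨zero_le_one, le_refl 1⟩) zero_le_one
  have hf0 : f 0 = R y := by simp [hf, hp]
  have hf1 : f 1 = R x - dot (gradR y) (x - y) - β/2 * (N (x - y))^2 := by
    simp [hf, hp]
  rw [hf0, hf1] at h01
  simp only [breg]
  linarith

set_option maxHeartbeats 1000000

/-- Regret bound for ε-approximate OMD with a β-smooth,
1-strongly-convex regularizer over a convex set of diameter `D`. -/
theorem stmt0 {d : ℕ} (K : Set (Fin d → ℝ)) (hK : Convex ℝ K)
    (N Nstar : (Fin d → ℝ) → ℝ)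
    -- `N` is a norm on ℝ^d:
    (hN0 : ∀ x, N x = 0 ↔ x = 0)
    (hNadd : ∀ x y, N (x + y) ≤ N x + N y)
    (hNsmul : ∀ (c : ℝ) x, N (c • x) = |c| * N x)
    -- `Nstar` is the dual norm of `N`:
    (hNstar : ∀ v, Nstar v = sSup {r : ℝ | ∃ u, N u ≤ 1 ∧ r = dot v u})
    -- `D` is the diameter of `K` with respect to `N`:
    (D : ℝ) (hD : D = sSup {r : ℝ | ∃ x ∈ K, ∃ y ∈ K, r = N (x - y)})
    (R : (Fin d → ℝ) → ℝ) (gradR : (Fin d → ℝ) → Fin d → ℝ)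
    -- `R` is differentiable on `K` with gradient `gradR`:
    (hdiff : ∀ x ∈ K, HasFDerivAt R (dotCLM (gradR x)) x)
    -- `R` is 1-strongly convex with respect to `N`:
    (hstrong : ∀ x ∈ K, ∀ y ∈ K, (1/2) * (N (x - y))^2 ≤ breg R gradR x y)
    -- `R` is β-smooth with respect to `N`:
    (β : ℝ) (hβ : 0 < β)
    (hsmooth : ∀ x ∈ K, ∀ y ∈ K, Nstar (gradR x - gradR y) ≤ β * N (x - y))
    (η : ℝ) (hη : 0 < η) (T : ℕ)
    (ℓ : ℕ → Fin d → ℝ) (hℓ : ∀ t i, ℓ t i ∈ Set.Icc (-1:ℝ) 1)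
    (ε : ℝ) (hε0 : 0 ≤ ε) (hε : ε ≤ D^2/2)
    -- `w` is an ε-approximate OMD trajectory:
    (w : ℕ → Fin d → ℝ) (hwK : ∀ t, w t ∈ K)
    (htraj : ∀ t < T, ∀ u ∈ K,
      η * dot (ℓ t) (w (t+1)) + breg R gradR (w (t+1)) (w t)
        ≤ η * dot (ℓ t) u + breg R gradR u (w t) + ε)
    (v : Fin d → ℝ) (hv : v ∈ K) :
    ∑ t ∈ Finset.range T, (dot (ℓ t) (w t) - dot (ℓ t) v)
      ≤ (1/η) * breg R gradR v (w 0)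
        + (η/2) * ∑ t ∈ Finset.range T, (Nstar (ℓ t))^2
        + T * D * Real.sqrt (2*β*ε) / η := by
  have hNn : ∀ x, 0 ≤ N x := OMD.N_nonneg N hN0 hNadd hNsmul
  have hpair : ∀ v z, dot v z ≤ Nstar v * N z :=
    OMD.pairing N hN0 hNadd hNsmul Nstar hNstar
  have hdescent : ∀ x ∈ K, ∀ y ∈ K, breg R gradR x y ≤ β/2 * (N (x - y))^2 :=
    OMD.descent K hK N Nstar hNsmul hNn hpair R gradR hdiff β hsmooth
  -- the diameter is nonnegative
  set S : Set ℝ := {r : ℝ | ∃ x ∈ K, ∃ y ∈ K, r = N (x - y)} with hS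
  have hmem0 : (0:ℝ) ∈ S := ⟨v, hv, v, hv, by simp [OMD.N_zero N hN0 hNsmul]⟩
  have hD0 : 0 ≤ D := by
    by_cases hb : BddAbove S
    · rw [hD]; exact le_csSup hb hmem0
    · rw [hD, Real.sSup_of_not_bddAbove hb]
  -- the basic inequality from approximate optimality
  have hbasic : ∀ t < T, ∀ u ∈ K, ∀ lam : ℝ, 0 < lam → lam ≤ 1 →
      lam * dot (η • ℓ t + gradR (w (t+1)) - gradR (w t)) (w (t+1) - u)
        ≤ ε + β/2 * lam^2 * (N (u - w (t+1)))^2 := by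
    intro t ht u hu lam hlam0 hlam1
    set W := w (t+1) with hW
    set ul : Fin d → ℝ := W + lam • (u - W) with hul
    have hulK : ul ∈ K := by
      have : ul = (1 - lam) • W + lam • u := by simp only [hul]; module
      rw [this]
      exact hK (hwK (t+1)) hu (by linarith) (le_of_lt hlam0) (by ring)
    have hulX : ∀ X : Fin d → ℝ, dot X ul = dot X W + lam * (dot X u - dot X W) := by
      intro X
      simp only [hul]
      rw [OMD.dot_add_right, OMD.dot_smul_right, OMD.dot_sub_right]
    have key : lam * dot (η • ℓ t + gradR W - gradR (w t)) (W - u)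
        = (η * dot (ℓ t) W + breg R gradR W (w t))
          - (η * dot (ℓ t) ul + breg R gradR ul (w t))
          + breg R gradR ul W := by
      simp only [breg, OMD.dot_sub_left, OMD.dot_add_left, OMD.dot_smul_left,
        OMD.dot_sub_right, hulX]
      ring
    have h1 := htraj t ht ul hulK
    have h2 : breg R gradR ul W ≤ β/2 * (N (ul - W))^2 := hdescent ul hulK W (hwK (t+1))
    have h3 : N (ul - W) = lam * N (u - W) := by
      have : ul - W = lam • (u - W) := by simp only [hul]; module
      rw [this, hNsmul, abs_of_pos hlam0]
    have h4 : (N (ul - W))^2 = lam^2 * (N (u - W))^2 := by rw [h3]; ring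
    rw [h4] at h2
    rw [key]
    linarith
  -- the key bound on the approximate first-order optimality gap
  have hkey : ∀ t < T, ∀ u ∈ K,
      dot (η • ℓ t + gradR (w (t+1)) - gradR (w t)) (w (t+1) - u)
        ≤ Real.sqrt (2*β*ε) * D := by
    intro t ht u hu
    by_cases hez : ε = 0
    · subst hez
      have hs : Real.sqrt (2*β*0) = 0 := by norm_num
      rw [hs, zero_mul]
      by_cases hNz : N (u - w (t+1)) = 0
      · have h := hbasic t ht u hu 1 one_pos le_rfl
        rw [hNz] at h
        simpa using h
      · have hNp : 0 < N (u - w (t+1)) := lt_of_le_of_ne (hNn _) (Ne.symm hNz)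
        by_contra hXpos
        push_neg at hXpos
        obtain ⟨X, hX⟩ : ∃ X, X = dot (η • ℓ t + gradR (w (t+1)) - gradR (w t)) (w (t+1) - u) :=
          ⟨_, rfl⟩
        rw [← hX] at hXpos
        obtain ⟨M, hM⟩ : ∃ M, M = N (u - w (t+1)) := ⟨_, rfl⟩
        rw [← hM] at hNp
        have hden : 0 < β * M^2 := by positivity
        have hlam0 : 0 < min 1 (X / (β * M^2)) := lt_min one_pos (div_pos hXpos hden)
        have hlam1 : min 1 (X / (β * M^2)) ≤ 1 := min_le_left _ _
        have hb := hbasic t ht u hu _ hlam0 hlam1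
        rw [← hX, ← hM] at hb
        have h7 : (min 1 (X / (β * M^2))) * (β * M^2) ≤ X := by
          have h6 := min_le_right 1 (X / (β * M^2))
          calc (min 1 (X / (β * M^2))) * (β * M^2)
              ≤ (X / (β * M^2)) * (β * M^2) := mul_le_mul_of_nonneg_right h6 (le_of_lt hden)
            _ = X := by field_simp
        obtain ⟨lam, hlamd⟩ : ∃ l, l = min 1 (X / (β * M^2)) := ⟨_, rfl⟩
        rw [← hlamd] at hb h7 hlam0
        simp only [add_zero, zero_add] at hb
        nlinarith [hb, h7, mul_pos hlam0 hXpos]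
    · have hεpos : 0 < ε := lt_of_le_of_ne hε0 (Ne.symm hez)
      have hD2 : 0 < D^2 := by nlinarith
      have hDpos : 0 < D := lt_of_le_of_ne hD0 (by intro h; rw [← h] at hD2; norm_num at hD2)
      have hbddS : BddAbove S := by
        by_contra hb
        rw [hD, Real.sSup_of_not_bddAbove hb] at hDpos
        norm_num at hDpos
      have hNleD : ∀ a ∈ K, ∀ b ∈ K, N (a - b) ≤ D := by
        intro a ha b hb
        rw [hD]
        exact le_csSup hbddS ⟨a, ha, b, hb, rfl⟩
      by_cases huW : u = w (t+1)
      · have hX0 : dot (η • ℓ t + gradR (w (t+1)) - gradR (w t)) (w (t+1) - u) = 0 := by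
          rw [huW]
          simp [dot]
        rw [hX0]
        exact mul_nonneg (Real.sqrt_nonneg _) hD0
      · have hNp : 0 < N (u - w (t+1)) := by
          rcases lt_or_eq_of_le (hNn (u - w (t+1))) with h | h
          · exact h
          · exact absurd (sub_eq_zero.mp ((hN0 _).1 h.symm)) huW
        have hβ1 : 1 ≤ β := by
          have hs1 := hstrong u hu (w (t+1)) (hwK (t+1))
          have hs2 := hdescent u hu (w (t+1)) (hwK (t+1))
          nlinarith [hs1, hs2, mul_pos hNp hNp, sq_nonneg (N (u - w (t+1)))]
        have hND := hNleD u hu (w (t+1)) (hwK (t+1))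
        -- abstract all the analytic quantities
        obtain ⟨s, hsdef⟩ : ∃ s, s = Real.sqrt (2*ε/β) := ⟨_, rfl⟩
        have hspos : 0 < s := hsdef ▸ Real.sqrt_pos.mpr (by positivity)
        have hs2 : s^2 = 2*ε/β := by rw [hsdef]; exact Real.sq_sqrt (by positivity)
        have hlam0 : 0 < s / D := div_pos hspos hDpos
        have hlamsq : (s/D)^2 ≤ 1 := by
          have h5 : (s/D)^2 = 2*ε/(β*D^2) := by
            rw [div_pow, hs2]; field_simp
          rw [h5, div_le_one (by positivity)]
          nlinarith
        have hlam1 : s/D ≤ 1 := by nlinarith [sq_nonneg (s/D - 1), hlam0]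
        have hb := hbasic t ht u hu (s/D) hlam0 hlam1
        obtain ⟨X, hX⟩ : ∃ X, X = dot (η • ℓ t + gradR (w (t+1)) - gradR (w t)) (w (t+1) - u) :=
          ⟨_, rfl⟩
        rw [← hX] at hb
        obtain ⟨M, hM⟩ : ∃ M, M = N (u - w (t+1)) := ⟨_, rfl⟩
        rw [← hM] at hb hNp hND
        obtain ⟨lam, hlamd⟩ : ∃ l, l = s / D := ⟨_, rfl⟩
        rw [← hlamd] at hb hlam0 hlam1 hlamsq
        have hN2D2 : M^2 ≤ D^2 := by nlinarith
        have hlam2D2 : lam^2 * D^2 = s^2 := by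
          rw [hlamd]; field_simp
        have hb2 : lam * X ≤ 2 * ε := by
          have h5 : β/2 * lam^2 * M^2 ≤ β/2 * lam^2 * D^2 := by
            apply mul_le_mul_of_nonneg_left hN2D2 (by positivity)
          have heq : β/2 * lam^2 * D^2 = ε := by
            have h6 : β/2 * (lam^2 * D^2) = ε := by
              rw [hlam2D2, hs2]; field_simp
            linarith [h6]
          linarith [hb, h5, heq]
        have h8 : Real.sqrt (2*β*ε) = 2*ε/s := by
          have h7 : (2*ε/s)^2 = 2*β*ε := by
            rw [div_pow, hs2]; field_simp
          rw [← h7, Real.sqrt_sq (by positivity)]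
        have h9 : X ≤ 2*ε/lam :=
          (le_div_iff₀ hlam0).mpr (by rw [mul_comm]; exact hb2)
        have h10 : 2*ε/lam = (2*ε/s) * D := by
          rw [hlamd]
          field_simp
        rw [← hX, h8, ← h10]
        exact h9
  -- per-step regret bound
  have hstep : ∀ t < T,
      η * (dot (ℓ t) (w t) - dot (ℓ t) v)
        ≤ (breg R gradR v (w t) - breg R gradR v (w (t+1)))
          + η^2/2 * (Nstar (ℓ t))^2 + Real.sqrt (2*β*ε) * D := by
    intro t ht
    set W := w (t+1) with hW
    have hk := hkey t ht v hv
    have threept : dot (gradR W - gradR (w t)) (W - v)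
        = breg R gradR v W + breg R gradR W (w t) - breg R gradR v (w t) := by
      simp only [breg, OMD.dot_sub_left, OMD.dot_sub_right]
      ring
    have hGexp : dot (η • ℓ t + gradR W - gradR (w t)) (W - v)
        = η * dot (ℓ t) (W - v) + dot (gradR W - gradR (w t)) (W - v) := by
      simp only [OMD.dot_add_left, OMD.dot_sub_left, OMD.dot_smul_left]
      ring
    have p1 : dot (ℓ t) (w t - W) ≤ Nstar (ℓ t) * N (w t - W) := hpair _ _
    have p1' : η * dot (ℓ t) (w t - W) ≤ η * (Nstar (ℓ t) * N (w t - W)) :=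
      mul_le_mul_of_nonneg_left p1 (le_of_lt hη)
    have p2 : η * (Nstar (ℓ t) * N (w t - W))
        ≤ η^2/2 * (Nstar (ℓ t))^2 + 1/2 * (N (w t - W))^2 := by
      nlinarith [sq_nonneg (η * Nstar (ℓ t) - N (w t - W))]
    have p3 : 1/2 * (N (w t - W))^2 ≤ breg R gradR W (w t) := by
      rw [OMD.N_symm N hNsmul]
      exact hstrong W (hwK (t+1)) (w t) (hwK t)
    have hsplit : η * (dot (ℓ t) (w t) - dot (ℓ t) v)
        = η * dot (ℓ t) (w t - W) + η * dot (ℓ t) (W - v) := by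
      rw [OMD.dot_sub_right, OMD.dot_sub_right]
      ring
    rw [hGexp] at hk
    rw [threept] at hk
    rw [hsplit]
    linarith
  -- sum and conclude
  have hsum : η * ∑ t ∈ Finset.range T, (dot (ℓ t) (w t) - dot (ℓ t) v)
      ≤ breg R gradR v (w 0) + η^2/2 * ∑ t ∈ Finset.range T, (Nstar (ℓ t))^2
        + T * (Real.sqrt (2*β*ε) * D) := by
    rw [Finset.mul_sum]
    have h1 : ∑ t ∈ Finset.range T, η * (dot (ℓ t) (w t) - dot (ℓ t) v)
        ≤ ∑ t ∈ Finset.range T,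
          ((breg R gradR v (w t) - breg R gradR v (w (t+1)))
            + η^2/2 * (Nstar (ℓ t))^2 + Real.sqrt (2*β*ε) * D) :=
      Finset.sum_le_sum fun t ht => hstep t (Finset.mem_range.mp ht)
    have h2 : ∑ t ∈ Finset.range T,
          ((breg R gradR v (w t) - breg R gradR v (w (t+1)))
            + η^2/2 * (Nstar (ℓ t))^2 + Real.sqrt (2*β*ε) * D)
        = (breg R gradR v (w 0) - breg R gradR v (w T))
          + η^2/2 * ∑ t ∈ Finset.range T, (Nstar (ℓ t))^2
          + T * (Real.sqrt (2*β*ε) * D) := by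
      rw [Finset.sum_add_distrib, Finset.sum_add_distrib, Finset.sum_range_sub',
        ← Finset.mul_sum, Finset.sum_const, Finset.card_range, nsmul_eq_mul]
    have h3 : 0 ≤ breg R gradR v (w T) := by
      have := hstrong v hv (w T) (hwK T)
      nlinarith [sq_nonneg (N (v - w T))]
    rw [h2] at h1
    linarith
  have hRHS : η * ((1/η) * breg R gradR v (w 0)
        + (η/2) * ∑ t ∈ Finset.range T, (Nstar (ℓ t))^2
        + T * D * Real.sqrt (2*β*ε) / η)
      = breg R gradR v (w 0) + η^2/2 * ∑ t ∈ Finset.range T, (Nstar (ℓ t))^2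
        + T * (Real.sqrt (2*β*ε) * D) := by
    field_simp
  exact le_of_mul_le_mul_left (by rw [hRHS]; exact hsum) hη
end
end

section
/- Let D, β, η, ε > 0, let K = [0, D] ⊂ ℝ, and let R(w) = (β/2)w². Consider the constant loss sequence ℓ_t = min{√(2βε)/η, 1} for all t = 1,…,T and the constant sequence w_t = D/2 for all t. Then this constant sequence is a valid ε-approximate OMD trajectory (with regularizer R, learning rate η, and these losses), and its regret against the comparator w = 0 equals (T·D/2)·min{√(2βε)/η, 1}; in particular there exist a loss sequence in [0,1], an ε-approximate OMD trajectory, and w ∈ K with Regret(w) ≥ (T·D/2)·min{√(2βε)/η, 1}. -/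
open Finset

noncomputable section

/-- The Euclidean regularizer `R(w) = (β/2)·w²` on `ℝ`. -/
def qreg (β w : ℝ) : ℝ := β/2 * w^2

/-- Bregman divergence of `R(w) = (β/2)·w²` (whose derivative is `β·w`). -/
def qbreg (β w w' : ℝ) : ℝ := qreg β w - qreg β w' - (β * w') * (w - w')

/-- Lower bound for ε-approximate OMD with the β-smooth Euclidean
regularizer over `K = [0, D]`: the constant sequence `w_t = D/2` is a valid
ε-approximate trajectory for the constant losses `min{√(2βε)/η, 1}`, and its regret
against the comparator `0` equals `(T·D/2)·min{√(2βε)/η, 1}`; in particular there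
exist losses in `[0,1]`, an ε-approximate trajectory, and a comparator in `K`
realizing at least this regret. -/
theorem stmt1 (D β η ε : ℝ) (hD : 0 < D) (hβ : 0 < β) (hη : 0 < η) (hε : 0 < ε) (T : ℕ) :
    -- the constant sequence `w_t = D/2` is a valid ε-approximate OMD trajectory
    (∀ t : ℕ, t < T → ∀ u ∈ Set.Icc (0:ℝ) D,
       η * (min (Real.sqrt (2*β*ε)/η) 1) * (D/2) + qbreg β (D/2) (D/2)
         ≤ η * (min (Real.sqrt (2*β*ε)/η) 1) * u + qbreg β u (D/2) + ε)
    -- its regret against the comparator `0` equals `(T·D/2)·min{√(2βε)/η, 1}`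
    ∧ (∑ _t ∈ Finset.range T, ((min (Real.sqrt (2*β*ε)/η) 1) * (D/2)
        - (min (Real.sqrt (2*β*ε)/η) 1) * 0)) = (T * D / 2) * min (Real.sqrt (2*β*ε)/η) 1
    -- in particular: existence of a hard instance
    ∧ ∃ ℓ : ℕ → ℝ, (∀ t, ℓ t ∈ Set.Icc (0:ℝ) 1) ∧
      ∃ w : ℕ → ℝ, (∀ t, w t ∈ Set.Icc (0:ℝ) D) ∧
        (∀ t : ℕ, t < T → ∀ u ∈ Set.Icc (0:ℝ) D,
          η * ℓ t * w (t+1) + qbreg β (w (t+1)) (w t)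
            ≤ η * ℓ t * u + qbreg β u (w t) + ε) ∧
        ∃ v ∈ Set.Icc (0:ℝ) D,
          (T * D / 2) * min (Real.sqrt (2*β*ε)/η) 1
            ≤ ∑ t ∈ Finset.range T, (ℓ t * w t - ℓ t * v) := by

  have hs : Real.sqrt (2*β*ε) ^ 2 = 2*β*ε := Real.sq_sqrt (by positivity)
  have hs0 : 0 ≤ Real.sqrt (2*β*ε) := Real.sqrt_nonneg _
  set L := min (Real.sqrt (2*β*ε)/η) 1 with hL
  have hL0 : 0 ≤ L := le_min (by positivity) zero_le_one
  have hηL : η * L ≤ Real.sqrt (2*β*ε) := by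
    have : L ≤ Real.sqrt (2*β*ε)/η := min_le_left _ _
    calc η * L ≤ η * (Real.sqrt (2*β*ε)/η) := by nlinarith
    _ = Real.sqrt (2*β*ε) := by field_simp
  have key : ∀ u ∈ Set.Icc (0:ℝ) D,
      η * L * (D/2) + qbreg β (D/2) (D/2) ≤ η * L * u + qbreg β u (D/2) + ε := by
    intro u hu
    simp only [qbreg, qreg]
    have hx : η * L * (D/2 - u) ≤ β/2 * (u - D/2)^2 + ε := by
      rcases le_or_gt (D/2 - u) 0 with h | h
      · nlinarith [mul_nonneg (mul_nonneg hη.le hL0) (neg_nonneg.2 h), sq_nonneg (u - D/2)]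
      · have h1 : η * L * (D/2 - u) ≤ Real.sqrt (2*β*ε) * (D/2 - u) := by nlinarith
        nlinarith [sq_nonneg (β*(D/2-u) - Real.sqrt (2*β*ε))]
    nlinarith [hx]
  refine ⟨fun t _ u hu => key u hu, ?_, ?_⟩
  · rw [Finset.sum_const, Finset.card_range]
    push_cast; ring
  · refine ⟨fun _ => L, fun t => ⟨hL0, min_le_right _ _⟩, fun _ => D/2,
      fun t => ⟨by linarith, by linarith⟩, fun t ht u hu => key u hu,
      0, ⟨le_refl _, hD.le⟩, ?_⟩
    have : (∑ _t ∈ Finset.range T, (L * (D/2) - L * 0)) = (T * D / 2) * L := by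
      rw [Finset.sum_const, Finset.card_range]
      simp only [nsmul_eq_mul]; push_cast; ring
    exact le_of_eq this.symm
end
end

section
/- Let K = {w ∈ ℝ^d : Aw = b, w^i ≥ 0 ∀i} be a polyhedral subset of the simplex Δ_d (so every w with Aw = b has Σ_i w^i = 1), and let R(w) = Σ_{i=1}^d r(w^i) be coordinate-separated with r twice differentiable and r'' > 0 on (0,1]. Let w_1,…,w_T be a trajectory in K that is k-balanced with respect to the L1 norm and is initialized at the uniform distribution w_1 = (1/d,…,1/d). Then for every t ∈ [T] and every coordinate i ∈ [d], −r'(w_t^i) ≤ max{4kd − r'(1/d), −r'(1/(2d))}. -/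
open Finset

noncomputable section

/-- L1 norm on `ℝ^d`. -/
def l1 {d : ℕ} (v : Fin d → ℝ) : ℝ := ∑ i, |v i|

/-- A polytope in standard form `{w : Aw = b, w ≥ 0}`. -/
def polySet {d k : ℕ} (A : Matrix (Fin k) (Fin d) ℝ) (b : Fin k → ℝ) : Set (Fin d → ℝ) :=
  {w | A.mulVec w = b ∧ ∀ i, 0 ≤ w i}

/-- For a k-balanced trajectory in a polyhedral subset of the
simplex, initialized at the uniform distribution, with a coordinate-separated
regularizer `R(w) = Σ_i r(w_i)` (with `r'' > 0` on `(0,1]`), every coordinate of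
every iterate satisfies `−r'(w_t^i) ≤ max{4kd − r'(1/d), −r'(1/(2d))}`. -/
theorem stmt11 {d kk T : ℕ} (A : Matrix (Fin kk) (Fin d) ℝ) (b : Fin kk → ℝ)
    -- `K` is a polyhedral subset of the simplex:
    (hsub : ∀ w : Fin d → ℝ, A.mulVec w = b → ∑ i, w i = 1)
    (r r' r'' : ℝ → ℝ)
    -- `r` is twice differentiable with `r'' > 0` on `(0,1]`:
    (hr : ∀ x ∈ Set.Ioc (0:ℝ) 1, HasDerivAt r (r' x) x ∧ HasDerivAt r' (r'' x) x ∧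
      0 < r'' x)
    (k : ℝ)
    (w : ℕ → Fin d → ℝ)
    (hwK : ∀ t, t < T → w t ∈ polySet A b)
    (hpos : ∀ t, t < T → ∀ i, 0 < w t i)
    -- initialized at the uniform distribution:
    (hw0 : w 0 = fun _ => (1:ℝ)/d)
    -- the trajectory is k-balanced w.r.t. the L1 norm:
    (hbal : ∀ v : Fin d → ℝ, A.mulVec v = 0 →
      ∀ t1 t2 : ℕ, t1 < t2 → t2 < T →
        dot ((fun i => r' (w t1 i)) - (fun i => r' (w t2 i))) v ≤ k * l1 v) :
    ∀ t, t < T → ∀ i : Fin d,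
      -(r' (w t i)) ≤ max (4*k*d - r' (1/(d:ℝ))) (-(r' (1/(2*(d:ℝ))))) := by
  intro t ht i
  have hd0 : 0 < d := i.pos
  have hd : (0:ℝ) < d := by exact_mod_cast hd0
  have hd1 : (1:ℝ) ≤ d := by exact_mod_cast hd0
  -- r' is strictly monotone on (0,1]
  have hcont : ContinuousOn r' (Set.Ioc (0:ℝ) 1) := fun x hx =>
    ((hr x hx).2.1.continuousAt).continuousWithinAt
  have hmono : StrictMonoOn r' (Set.Ioc (0:ℝ) 1) := by
    apply strictMonoOn_of_deriv_pos (convex_Ioc _ _) hcont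
    intro x hx
    rw [interior_Ioc] at hx
    have hx' : x ∈ Set.Ioc (0:ℝ) 1 := ⟨hx.1, le_of_lt hx.2⟩
    rw [(hr x hx').2.1.deriv]
    exact (hr x hx').2.2
  -- membership facts
  have hmem : ∀ s, s < T → ∀ j : Fin d, w s j ∈ Set.Ioc (0:ℝ) 1 := by
    intro s hs j
    refine ⟨hpos s hs j, ?_⟩
    have hsum : ∑ m, w s m = 1 := hsub _ (hwK s hs).1
    calc w s j ≤ ∑ m, w s m := Finset.single_le_sum (fun m _ => (hwK s hs).2 m) (mem_univ j)
      _ = 1 := hsum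
  have h2dpos : (0:ℝ) < 1/(2*d) := by positivity
  have h2dmem : (1:ℝ)/(2*d) ∈ Set.Ioc (0:ℝ) 1 := by
    refine ⟨h2dpos, ?_⟩
    rw [div_le_one (by positivity)]
    linarith
  have h1dmem : (1:ℝ)/d ∈ Set.Ioc (0:ℝ) 1 := by
    refine ⟨by positivity, ?_⟩
    rw [div_le_one hd]; exact hd1
  rcases le_or_gt (1/(2*(d:ℝ))) (w t i) with hcase | hcase
  · -- easy case: w t i ≥ 1/(2d)
    have := hmono.monotoneOn h2dmem (hmem t ht i) hcase
    exact le_max_of_le_right (by linarith)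
  · -- hard case
    have ht0 : t ≠ 0 := by
      intro h0
      rw [h0, hw0] at hcase
      simp only at hcase
      rw [div_lt_div_iff₀ hd (by positivity)] at hcase
      nlinarith
    have htpos : 0 < t := Nat.pos_of_ne_zero ht0
    set v : Fin d → ℝ := fun j => w 0 j - w t j with hv
    have hker : A.mulVec v = 0 := by
      have : A.mulVec v = A.mulVec (w 0) - A.mulVec (w t) := by
        ext m
        simp [Matrix.mulVec, dotProduct, hv, mul_sub, Finset.sum_sub_distrib]
      rw [this, (hwK 0 (lt_of_le_of_lt (Nat.zero_le t) ht)).1, (hwK t ht).1, sub_self]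
    have hb := hbal v hker 0 t htpos ht
    -- rewrite dot as a sum of nonneg terms
    have hdot : dot ((fun j => r' (w 0 j)) - (fun j => r' (w t j))) v
        = ∑ j, (r' (w 0 j) - r' (w t j)) * (w 0 j - w t j) := by
      simp [dot, hv, Pi.sub_apply]
    have hterm_nonneg : ∀ j : Fin d, 0 ≤ (r' (w 0 j) - r' (w t j)) * (w 0 j - w t j) := by
      intro j
      have hm0 : w 0 j ∈ Set.Ioc (0:ℝ) 1 :=
        hmem 0 (lt_of_le_of_lt (Nat.zero_le t) ht) j
      have hmt : w t j ∈ Set.Ioc (0:ℝ) 1 := hmem t ht j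
      rcases le_total (w t j) (w 0 j) with h | h
      · exact mul_nonneg (by linarith [hmono.monotoneOn hmt hm0 h]) (by linarith)
      · have h1 : r' (w 0 j) ≤ r' (w t j) := hmono.monotoneOn hm0 hmt h
        nlinarith
    have w0i : w 0 i = 1/(d:ℝ) := by rw [hw0]
    have hgap : 1/(2*(d:ℝ)) ≤ w 0 i - w t i := by
      rw [w0i]
      have : (1:ℝ)/d - 1/(2*d) = 1/(2*d) := by field_simp; ring
      linarith
    have hwti : w t i ∈ Set.Ioc (0:ℝ) 1 := hmem t ht i
    have hlt : w t i < 1/(d:ℝ) := by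
      have : (1:ℝ)/(2*d) < 1/d := by
        rw [div_lt_div_iff₀ (by positivity) hd]; nlinarith
      linarith
    have hstrict : r' (w t i) < r' (1/(d:ℝ)) := hmono hwti h1dmem hlt
    have hterm_i : 0 < (r' (w 0 i) - r' (w t i)) * (w 0 i - w t i) := by
      apply mul_pos
      · rw [w0i]; linarith
      · linarith
    have hsingle : (r' (w 0 i) - r' (w t i)) * (w 0 i - w t i)
        ≤ ∑ j, (r' (w 0 j) - r' (w t j)) * (w 0 j - w t j) :=
      Finset.single_le_sum (fun j _ => hterm_nonneg j) (mem_univ i)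
    -- l1 bound
    have hl1_nonneg : 0 ≤ l1 v := Finset.sum_nonneg fun j _ => abs_nonneg _
    have hl1 : l1 v ≤ 2 := by
      have hsum0 : ∑ j, w 0 j = 1 := hsub _ (hwK 0 (lt_of_le_of_lt (Nat.zero_le t) ht)).1
      have hsumt : ∑ j, w t j = 1 := hsub _ (hwK t ht).1
      have : l1 v ≤ ∑ j, (w 0 j + w t j) := by
        apply Finset.sum_le_sum
        intro j _
        have h0 : 0 ≤ w 0 j := (hwK 0 (lt_of_le_of_lt (Nat.zero_le t) ht)).2 j
        have h1 : 0 ≤ w t j := (hwK t ht).2 j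
        rw [hv, abs_sub_le_iff]
        constructor <;> linarith
      rw [Finset.sum_add_distrib, hsum0, hsumt] at this
      linarith
    have hchain : (r' (w 0 i) - r' (w t i)) * (w 0 i - w t i) ≤ k * l1 v := by
      calc (r' (w 0 i) - r' (w t i)) * (w 0 i - w t i)
          ≤ ∑ j, (r' (w 0 j) - r' (w t j)) * (w 0 j - w t j) := hsingle
        _ = dot ((fun j => r' (w 0 j)) - (fun j => r' (w t j))) v := hdot.symm
        _ ≤ k * l1 v := hb
    have hkpos : 0 < k := by
      by_contra hk
      push_neg at hk
      have : k * l1 v ≤ 0 := mul_nonpos_of_nonpos_of_nonneg hk hl1_nonneg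
      linarith
    have hk2 : (r' (w 0 i) - r' (w t i)) * (w 0 i - w t i) ≤ 2 * k := by
      calc (r' (w 0 i) - r' (w t i)) * (w 0 i - w t i) ≤ k * l1 v := hchain
        _ ≤ k * 2 := by nlinarith
        _ = 2 * k := by ring
    -- (r'(1/d) - r'(w t i)) * (1/(2d)) ≤ 2k
    have hfac : 0 ≤ r' (w 0 i) - r' (w t i) := by rw [w0i]; linarith
    have hkey : (r' (w 0 i) - r' (w t i)) * (1/(2*(d:ℝ))) ≤ 2 * k := by
      calc (r' (w 0 i) - r' (w t i)) * (1/(2*(d:ℝ)))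
          ≤ (r' (w 0 i) - r' (w t i)) * (w 0 i - w t i) :=
            mul_le_mul_of_nonneg_left hgap hfac
        _ ≤ 2 * k := hk2
    have hfinal : r' (1/(d:ℝ)) - r' (w t i) ≤ 4 * k * d := by
      rw [w0i] at hkey
      have h2d : (0:ℝ) < 2*d := by positivity
      rw [mul_one_div, div_le_iff₀ h2d] at hkey
      nlinarith
    exact le_max_of_le_left (by linarith)
end
end

section
/- Let ‖·‖ be a norm on ℝ^d, let W ⊆ ℝ^d be convex, let f : W → ℝ be differentiable, and let ŵ, w ∈ W with ŵ an ε-minimizer of f over W (f(ŵ) ≤ inf_{u∈W} f(u) + ε). Suppose there is β > 0 such that for all x, y on the segment [w, ŵ], f(y) − f(x) − ⟨∇f(x), y − x⟩ ≤ (β/2)·‖y − x‖². Then ⟨∇f(ŵ), w − ŵ⟩ ≥ −max{‖w − ŵ‖·√(2βε), 2ε}. Moreover, if D ≥ ‖w − ŵ‖ and ε ≤ D²β/2, then ⟨∇f(ŵ), w − ŵ⟩ ≥ −D·√(2βε). -/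
open Finset

noncomputable section

/-- Approximate first-order optimality conditions: if `ŵ` is an
ε-minimizer of a differentiable `f` over a convex set `W` and `f` satisfies a
β-smoothness upper bound along the segment `[w, ŵ]`, then
`⟨∇f(ŵ), w − ŵ⟩ ≥ −max{‖w − ŵ‖·√(2βε), 2ε}`; moreover if `‖w − ŵ‖ ≤ D` and
`ε ≤ D²β/2` then `⟨∇f(ŵ), w − ŵ⟩ ≥ −D·√(2βε)`. -/
theorem stmt13 {d : ℕ}
    (N : (Fin d → ℝ) → ℝ)
    -- `N` is a norm on ℝ^d:
    (hN0 : ∀ x, N x = 0 ↔ x = 0)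
    (hNadd : ∀ x y, N (x + y) ≤ N x + N y)
    (hNsmul : ∀ (c : ℝ) x, N (c • x) = |c| * N x)
    (W : Set (Fin d → ℝ)) (hW : Convex ℝ W)
    (f : (Fin d → ℝ) → ℝ) (gradf : (Fin d → ℝ) → Fin d → ℝ)
    -- `f` is differentiable on `W` with gradient `gradf`:
    (hdiff : ∀ x ∈ W, HasFDerivAt f (dotCLM (gradf x)) x)
    (what w : Fin d → ℝ) (hwhat : what ∈ W) (hw : w ∈ W)
    (ε : ℝ) (hε0 : 0 ≤ ε)
    -- `ŵ` is an ε-minimizer of `f` over `W`: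
    (hmin : ∀ u ∈ W, f what ≤ f u + ε)
    (β : ℝ) (hβ : 0 < β)
    -- β-smoothness upper bound along the segment `[w, ŵ]`:
    (hsmooth : ∀ x ∈ segment ℝ w what, ∀ y ∈ segment ℝ w what,
      f y - f x - dot (gradf x) (y - x) ≤ β/2 * (N (y - x))^2) :
    -(max (N (w - what) * Real.sqrt (2*β*ε)) (2*ε)) ≤ dot (gradf what) (w - what)
    ∧ ∀ D : ℝ, N (w - what) ≤ D → ε ≤ D^2 * β / 2 →
        -(D * Real.sqrt (2*β*ε)) ≤ dot (gradf what) (w - what) := by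
  have h0 : N 0 = 0 := (hN0 0).2 rfl
  set R := N (w - what) with hR
  set g := dot (gradf what) (w - what) with hg
  have hR0 : 0 ≤ R := by
    have h1 := hNadd (w - what) (what - w)
    have h2 : N (what - w) = N (w - what) := by
      have := hNsmul (-1) (w - what)
      rw [show ((-1:ℝ)) • (w - what) = what - w by module] at this
      simpa using this
    rw [show (w - what) + (what - w) = 0 by module, h0, h2] at h1
    linarith
  have hdots : ∀ (c : ℝ), dot (gradf what) (c • (w - what)) = c * g := by
    intro c
    simp only [hg, dot, Finset.mul_sum, Pi.smul_apply, smul_eq_mul]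
    exact Finset.sum_congr rfl fun i _ => by ring
  have hseg : ∀ t : ℝ, 0 ≤ t → t ≤ 1 →
      what + t • (w - what) ∈ segment ℝ w what := by
    intro t ht0 ht1
    exact ⟨t, 1 - t, ht0, by linarith, by ring, by module⟩
  have key : ∀ t : ℝ, 0 ≤ t → t ≤ 1 → -ε - β/2 * t^2 * R^2 ≤ t * g := by
    intro t ht0 ht1
    have hy := hseg t ht0 ht1
    have hx : what ∈ segment ℝ w what := right_mem_segment ℝ w what
    have h1 := hsmooth what hx (what + t • (w - what)) hy
    have h2 := hmin (what + t • (w - what)) (hW.segment_subset hw hwhat hy)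
    have hsub : (what + t • (w - what)) - what = t • (w - what) := by module
    rw [hsub, hNsmul, abs_of_nonneg ht0, hdots] at h1
    nlinarith [sq_nonneg (t * R)]
  -- the case ε = 0 : show 0 ≤ g
  have hzero : ε = 0 → 0 ≤ g := by
    intro hε
    rcases eq_or_lt_of_le hR0 with hReq | hRpos
    · have hwe : w - what = 0 := (hN0 _).1 hReq.symm
      have : g = 0 := by rw [hg, hwe]; simp [dot]
      linarith
    · by_contra hgneg
      push_neg at hgneg
      set t : ℝ := min 1 (-g / (β * R^2)) with ht
      have hden : 0 < β * R^2 := by positivity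
      have ht0 : 0 < t := lt_min one_pos (div_pos (by linarith) hden)
      have ht1 : t ≤ 1 := min_le_left _ _
      have ht2 : t ≤ -g / (β * R^2) := min_le_right _ _
      have hk := key t ht0.le ht1
      rw [hε] at hk
      have htR : t * (β * R^2) ≤ -g := (le_div_iff₀ hden).mp ht2
      nlinarith
  rcases eq_or_lt_of_le hε0 with hεeq | hεpos
  · have hg0 := hzero hεeq.symm
    constructor
    · have : (0:ℝ) ≤ max (R * Real.sqrt (2*β*ε)) (2*ε) :=
        le_max_of_le_right (by linarith)
      linarith
    · intro D hD hD2
      rw [← hεeq]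
      simp only [mul_zero, Real.sqrt_zero, mul_zero, neg_zero]
      exact hg0
  · -- ε > 0
    have hs : 0 < Real.sqrt (2*β*ε) := Real.sqrt_pos.2 (by positivity)
    have hs2 : (Real.sqrt (2*β*ε))^2 = 2*β*ε := Real.sq_sqrt (by positivity)
    set s := Real.sqrt (2*β*ε) with hsdef
    have main : ∀ D : ℝ, R ≤ D → 2*ε ≤ β * D^2 → -(D * s) ≤ g := by
      intro D hRD h2ε
      have hD0' : 0 ≤ D := hR0.trans hRD
      have hD0 : 0 < D := by
        rcases eq_or_lt_of_le hD0' with h | h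
        · exfalso; rw [← h] at h2ε; simp at h2ε; nlinarith
        · exact h
      set t : ℝ := s / (β * D) with htdef
      have hβD : 0 < β * D := by positivity
      have ht0 : 0 < t := by positivity
      have ht1 : t ≤ 1 := by
        rw [div_le_one hβD]
        nlinarith
      have hk := key t ht0.le ht1
      have hβne : (β:ℝ) ≠ 0 := ne_of_gt hβ
      have hDne : (D:ℝ) ≠ 0 := ne_of_gt hD0
      have ht2v : t^2 = 2*ε/(β*D^2) := by
        rw [htdef, div_pow, hs2]; field_simp
      have hA : β/2*t^2*D^2 = ε := by rw [ht2v]; field_simp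
      have hRD2 : R^2 ≤ D^2 := by nlinarith
      have h6 : β/2*t^2*R^2 ≤ β/2*t^2*D^2 := by
        have h7 : (0:ℝ) ≤ β/2*t^2 := by positivity
        nlinarith
      have h5 : -(2*ε) ≤ t*g := by linarith [hk, h6]
      have hB : t * (D * s) = 2*ε := by
        rw [htdef]; field_simp; linear_combination hs2
      have h7 : t * -(D*s) ≤ t * g := by
        have h8 : t * -(D*s) = -(2*ε) := by linear_combination -hB
        linarith
      exact (mul_le_mul_iff_right₀ ht0).mp h7
    constructor
    · rcases le_or_gt (2*ε) (β * R^2) with hcase | hcase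
      · have := main R le_rfl hcase
        calc -(max (R * s) (2*ε)) ≤ -(R * s) := by
              linarith [le_max_left (R*s) (2*ε)]
          _ ≤ g := this
      · have hk := key 1 zero_le_one le_rfl
        have : -(2*ε) ≤ g := by nlinarith
        calc -(max (R * s) (2*ε)) ≤ -(2*ε) := by
              linarith [le_max_right (R*s) (2*ε)]
          _ ≤ g := this
    · intro D hD hD2
      exact main D hD (by nlinarith)
end
end

section
/- Let K ⊆ ℝ^d be a compact convex set, let ‖·‖ be a norm with dual norm ‖·‖_*, and let R : K → ℝ be differentiable and 1-strongly convex with respect to ‖·‖. Fix η > 0, ε ≥ 0, and loss vectors ℓ_1,…,ℓ_T with ‖ℓ_t‖_* ≤ 1 for all t. Consider approximate Follow-The-Regularized-Leader: w̃_1 ∈ argmin_{w∈K} R(w) and, for each t ≥ 1, w̃_{t+1} is an ε-minimizer over K of φ_t(w) = η·Σ_{s=1}^t ⟨ℓ_s, w⟩ + R(w). Then for every w* ∈ K, Σ_{t=1}^T ⟨ℓ_t, w̃_t − w*⟩ ≤ (R(w*) − R(w̃_1))/η + (2η + √(2ε))·T. -/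
open Finset

noncomputable section

/-- Regret bound for ε-approximate Follow-The-Regularized-Leader:
with a differentiable, 1-strongly-convex regularizer `R` over a compact convex set,
losses with dual norm at most `1`, initialization at an exact minimizer of `R`,
and ε-approximate FTRL updates, the regret against any `w* ∈ K` is at most
`(R(w*) − R(w̃₁))/η + (2η + √(2ε))·T`. -/
theorem stmt19 {d : ℕ} (K : Set (Fin d → ℝ)) (hKc : IsCompact K) (hKconv : Convex ℝ K)
    (N Nstar : (Fin d → ℝ) → ℝ)
    -- `N` is a norm on ℝ^d:
    (hN0 : ∀ x, N x = 0 ↔ x = 0)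
    (hNadd : ∀ x y, N (x + y) ≤ N x + N y)
    (hNsmul : ∀ (c : ℝ) x, N (c • x) = |c| * N x)
    -- `Nstar` is the dual norm of `N`:
    (hNstar : ∀ v, Nstar v = sSup {r : ℝ | ∃ u, N u ≤ 1 ∧ r = dot v u})
    (R : (Fin d → ℝ) → ℝ) (gradR : (Fin d → ℝ) → Fin d → ℝ)
    -- `R` is differentiable with gradient `gradR`:
    (hdiff : ∀ x ∈ K, HasFDerivAt R (dotCLM (gradR x)) x)
    -- `R` is 1-strongly convex with respect to `N`:
    (hstrong : ∀ x ∈ K, ∀ y ∈ K,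
      (1/2) * (N (x - y))^2 ≤ R x - R y - dot (gradR y) (x - y))
    (η ε : ℝ) (hη : 0 < η) (hε0 : 0 ≤ ε) (T : ℕ)
    (ℓ : ℕ → Fin d → ℝ) (hℓ : ∀ t, Nstar (ℓ t) ≤ 1)
    (w : ℕ → Fin d → ℝ)
    -- `w̃₁` minimizes `R` over `K`:
    (hw0K : w 0 ∈ K) (hw0 : ∀ u ∈ K, R (w 0) ≤ R u)
    -- ε-approximate FTRL updates:
    (hstep : ∀ t < T, w (t+1) ∈ K ∧ ∀ u ∈ K,
      η * (∑ s ∈ Finset.range (t+1), dot (ℓ s) (w (t+1))) + R (w (t+1))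
        ≤ η * (∑ s ∈ Finset.range (t+1), dot (ℓ s) u) + R u + ε)
    (wstar : Fin d → ℝ) (hws : wstar ∈ K) :
    ∑ t ∈ Finset.range T, (dot (ℓ t) (w t) - dot (ℓ t) wstar)
      ≤ (R wstar - R (w 0)) / η + (2*η + Real.sqrt (2*ε)) * T := by
  classical
  -- basic dot lemmas
  have hdotCLM : ∀ v u : Fin d → ℝ, dotCLM v u = dot v u := by
    intro v u
    simp [dotCLM, dot]
  have hdsub : ∀ v x y : Fin d → ℝ, dot v (x - y) = dot v x - dot v y := by
    intro v x y
    simp [dot, mul_sub, Finset.sum_sub_distrib]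
  have hdotL : ∀ (n : ℕ) (x : Fin d → ℝ),
      dot (∑ s ∈ Finset.range n, ℓ s) x = ∑ s ∈ Finset.range n, dot (ℓ s) x := by
    intro n x
    simp only [dot, Finset.sum_apply, Finset.sum_mul]
    exact Finset.sum_comm
  -- basic norm lemmas
  have hN0' : N 0 = 0 := (hN0 0).mpr rfl
  have hNneg : ∀ x, N (-x) = N x := by
    intro x; simpa using hNsmul (-1) x
  have hNnn : ∀ x, 0 ≤ N x := by
    intro x
    have h := hNadd x (-x)
    rw [add_neg_cancel, hN0', hNneg] at h
    linarith
  -- upper bound: N x ≤ C * ‖x‖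
  set e : Fin d → Fin d → ℝ := fun i j => if i = j then (1:ℝ) else 0 with he
  set C : ℝ := ∑ i, N (e i) with hC
  have hNsum : ∀ (s : Finset (Fin d)) (g : Fin d → Fin d → ℝ),
      N (∑ i ∈ s, g i) ≤ ∑ i ∈ s, N (g i) := by
    intro s g
    induction s using Finset.induction with
    | empty => simp [hN0']
    | insert _ _ hx ih =>
      rw [Finset.sum_insert hx, Finset.sum_insert hx]
      exact le_trans (hNadd _ _) (by linarith)
  have hub : ∀ x, N x ≤ C * ‖x‖ := by
    intro x
    have hx : x = ∑ i, x i • e i := pi_eq_sum_univ x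
    calc N x = N (∑ i, x i • e i) := by rw [← hx]
      _ ≤ ∑ i, N (x i • e i) := hNsum _ _
      _ = ∑ i, |x i| * N (e i) := by simp [hNsmul]
      _ ≤ ∑ i : Fin d, ‖x‖ * N (e i) := by
          refine Finset.sum_le_sum fun i _ => ?_
          exact mul_le_mul_of_nonneg_right
            (by simpa using norm_le_pi_norm x i) (hNnn _)
      _ = C * ‖x‖ := by
          rw [hC, Finset.sum_mul]
          exact Finset.sum_congr rfl fun i _ => mul_comm _ _
  have hC0 : 0 ≤ C := Finset.sum_nonneg fun i _ => hNnn _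
  -- N is continuous
  have hNsubadd : ∀ x y, N x - N y ≤ N (x - y) := by
    intro x y
    have := hNadd (x - y) y
    simpa using this
  have hNcont : Continuous N := by
    refine (LipschitzWith.of_dist_le_mul (K := C.toNNReal) (f := N) ?_).continuous
    intro x y
    rw [Real.dist_eq, dist_eq_norm]
    have h1 : N x - N y ≤ C * ‖x - y‖ := le_trans (hNsubadd x y) (hub _)
    have h2 : N y - N x ≤ C * ‖x - y‖ := by
      have := le_trans (hNsubadd y x) (hub (y - x))
      rwa [show y - x = -(x - y) by ring, norm_neg] at this
    have hCC : (C.toNNReal : ℝ) = C := Real.coe_toNNReal _ hC0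
    rw [hCC]
    rw [abs_sub_le_iff]
    exact ⟨h1, h2⟩
  -- lower bound: c * ‖x‖ ≤ N x
  obtain ⟨c, hc0, hlb⟩ : ∃ c : ℝ, 0 < c ∧ ∀ x, c * ‖x‖ ≤ N x := by
    by_cases hd : ∀ x : Fin d → ℝ, x = 0
    · exact ⟨1, one_pos, fun x => by simp [hd x, hN0']⟩
    · push_neg at hd
      obtain ⟨x0, hx0⟩ := hd
      have hx0n : ‖x0‖ ≠ 0 := norm_ne_zero_iff.mpr hx0
      have hsph : (Metric.sphere (0 : Fin d → ℝ) 1).Nonempty := by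
        refine ⟨‖x0‖⁻¹ • x0, ?_⟩
        simp [norm_smul, inv_mul_cancel₀ hx0n]
      obtain ⟨z, hz, hzmin⟩ := (isCompact_sphere (0 : Fin d → ℝ) 1).exists_isMinOn
        hsph hNcont.continuousOn
      have hzn : ‖z‖ = 1 := by simpa using hz
      have hz0 : z ≠ 0 := by
        intro h; rw [h, norm_zero] at hzn; exact one_ne_zero hzn.symm
      have hcz : 0 < N z := lt_of_le_of_ne (hNnn z) fun h => hz0 ((hN0 z).mp h.symm)
      refine ⟨N z, hcz, fun x => ?_⟩
      by_cases hx : x = 0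
      · simp [hx, hN0']
      · have hxn : ‖x‖ ≠ 0 := norm_ne_zero_iff.mpr hx
        have hu : ‖x‖⁻¹ • x ∈ Metric.sphere (0 : Fin d → ℝ) 1 := by
          simp [norm_smul, inv_mul_cancel₀ hxn]
        have h1 : N z ≤ N (‖x‖⁻¹ • x) := hzmin hu
        have h2 : N (‖x‖⁻¹ • x) = ‖x‖⁻¹ * N x := by
          rw [hNsmul, abs_inv, abs_norm]
        have hxp : 0 < ‖x‖ := lt_of_le_of_ne (norm_nonneg x) (Ne.symm hxn)
        rw [h2] at h1
        calc N z * ‖x‖ ≤ (‖x‖⁻¹ * N x) * ‖x‖ :=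
              mul_le_mul_of_nonneg_right h1 (norm_nonneg x)
          _ = N x := by field_simp
  -- pairing: dot (ℓ t) x ≤ N x
  have hpair : ∀ (t : ℕ) (x : Fin d → ℝ), dot (ℓ t) x ≤ N x := by
    intro t x
    have hbdd : BddAbove {r : ℝ | ∃ u, N u ≤ 1 ∧ r = dot (ℓ t) u} := by
      refine ⟨(∑ i, |ℓ t i|) * c⁻¹, fun r hr => ?_⟩
      obtain ⟨u, hu1, rfl⟩ := hr
      have hun : ‖u‖ ≤ c⁻¹ := by
        have := hlb u
        rw [← le_div_iff₀' hc0] at this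
        calc ‖u‖ ≤ N u / c := this
          _ ≤ 1 / c := by gcongr
          _ = c⁻¹ := one_div c
      calc dot (ℓ t) u ≤ ∑ i, |ℓ t i * u i| :=
            Finset.sum_le_sum fun i _ => le_abs_self _
        _ = ∑ i, |ℓ t i| * |u i| := by simp [abs_mul]
        _ ≤ ∑ i, |ℓ t i| * c⁻¹ := by
            refine Finset.sum_le_sum fun i _ => ?_
            refine mul_le_mul_of_nonneg_left ?_ (abs_nonneg _)
            exact le_trans (by simpa using norm_le_pi_norm u i) hun
        _ = (∑ i, |ℓ t i|) * c⁻¹ := by rw [Finset.sum_mul]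
    by_cases hx : N x = 0
    · have : x = 0 := (hN0 x).mp hx
      simp [this, dot, hN0']
    · have hxp : 0 < N x := lt_of_le_of_ne (hNnn x) (Ne.symm hx)
      have hmem : dot (ℓ t) ((N x)⁻¹ • x) ∈ {r : ℝ | ∃ u, N u ≤ 1 ∧ r = dot (ℓ t) u} := by
        refine ⟨(N x)⁻¹ • x, ?_, rfl⟩
        rw [hNsmul, abs_inv, abs_of_pos hxp, inv_mul_cancel₀ hx]
      have hle : dot (ℓ t) ((N x)⁻¹ • x) ≤ 1 := by
        have h1 := le_csSup hbdd hmem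
        rw [← hNstar] at h1
        exact le_trans h1 (hℓ t)
      have hds : dot (ℓ t) ((N x)⁻¹ • x) = (N x)⁻¹ * dot (ℓ t) x := by
        simp only [dot, Pi.smul_apply, smul_eq_mul, Finset.mul_sum]
        exact Finset.sum_congr rfl fun i _ => by ring
      rw [hds] at hle
      calc dot (ℓ t) x = N x * ((N x)⁻¹ * dot (ℓ t) x) := by field_simp
        _ ≤ N x * 1 := mul_le_mul_of_nonneg_left hle (hNnn x)
        _ = N x := mul_one _
  -- the FTRL objective
  set f : ℕ → (Fin d → ℝ) → ℝ :=
    fun t u => η * (∑ s ∈ Finset.range t, dot (ℓ s) u) + R u with hf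
  -- continuity of f t on K
  have hRcont : ContinuousOn R K := fun x hx =>
    ((hdiff x hx).continuousAt).continuousWithinAt
  have hfun : ∀ t : ℕ, (fun x : Fin d → ℝ => ∑ s ∈ Finset.range t, dot (ℓ s) x)
      = ⇑(dotCLM (∑ s ∈ Finset.range t, ℓ s)) := by
    intro t; funext x; rw [hdotCLM, hdotL]
  have hfcont : ∀ t, ContinuousOn (f t) K := by
    intro t
    apply ContinuousOn.add _ hRcont
    apply Continuous.continuousOn
    have h1 : Continuous fun x : Fin d → ℝ => ∑ s ∈ Finset.range t, dot (ℓ s) x := by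
      rw [hfun t]; exact (dotCLM _).continuous
    exact continuous_const.mul h1
  -- exact minimizers
  have hmin : ∀ t : ℕ, ∃ v, v ∈ K ∧ ∀ u ∈ K, f t v ≤ f t u := by
    intro t
    obtain ⟨v, hvK, hv⟩ := hKc.exists_isMinOn ⟨wstar, hws⟩ (hfcont t)
    exact ⟨v, hvK, fun u hu => hv hu⟩
  set v : ℕ → Fin d → ℝ :=
    fun t => Nat.casesOn t (w 0) (fun s => (hmin (s+1)).choose) with hv
  have hvK : ∀ t, v t ∈ K := by
    intro t
    cases t with
    | zero => exact hw0K
    | succ s => exact (hmin (s+1)).choose_spec.1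
  have hvmin : ∀ t, ∀ u ∈ K, f t (v t) ≤ f t u := by
    intro t u hu
    cases t with
    | zero => simpa [hf, show v 0 = w 0 from rfl] using hw0 u hu
    | succ s => exact (hmin (s+1)).choose_spec.2 u hu
  -- key strong-convexity inequality for exact minimizers
  have hkey : ∀ t, ∀ u ∈ K, f t (v t) + (1/2) * (N (u - v t))^2 ≤ f t u := by
    intro t u hu
    set L : Fin d → ℝ := ∑ s ∈ Finset.range t, ℓ s with hL
    set a := v t with ha
    have haK : a ∈ K := hvK t
    -- derivative of f t at a
    have hder : HasFDerivAt (f t) (η • dotCLM L + dotCLM (gradR a)) a := by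
      have h1 : HasFDerivAt (fun x : Fin d → ℝ => η * ∑ s ∈ Finset.range t, dot (ℓ s) x)
          (η • dotCLM L) a := by
        have h2 : HasFDerivAt (fun x : Fin d → ℝ => ∑ s ∈ Finset.range t, dot (ℓ s) x)
            (dotCLM L) a := by
          rw [hfun t]; exact (dotCLM L).hasFDerivAt
        simpa using h2.const_mul η
      exact h1.add (hdiff a haK)
    -- first-order optimality
    have hcone : u - a ∈ posTangentConeAt K a :=
      sub_mem_posTangentConeAt_of_segment_subset (hKconv.segment_subset haK hu)
    have hfo : 0 ≤ (η • dotCLM L + dotCLM (gradR a)) (u - a) :=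
      ((isMinOn_iff.mpr (hvmin t)).localize).hasFDerivWithinAt_nonneg hder.hasFDerivWithinAt hcone
    have hfo' : 0 ≤ η * dot L (u - a) + dot (gradR a) (u - a) := by
      simpa [ContinuousLinearMap.add_apply, hdotCLM, smul_eq_mul] using hfo
    have hsc := hstrong u hu a haK
    have hLsplit : dot L (u - a) = (∑ s ∈ Finset.range t, dot (ℓ s) u)
        - ∑ s ∈ Finset.range t, dot (ℓ s) a := by
      rw [hdsub, hL, hdotL, hdotL]
    simp only [hf]
    nlinarith [hfo', hsc, hLsplit]
  -- ε-closeness of iterates to exact minimizers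
  have hsq : ∀ x : Fin d → ℝ, (N x)^2 ≤ 2*ε → N x ≤ Real.sqrt (2*ε) := by
    intro x h
    have := Real.sqrt_le_sqrt h
    rwa [Real.sqrt_sq (hNnn x)] at this
  have hclose : ∀ t, t < T → N (w t - v t) ≤ Real.sqrt (2*ε) := by
    intro t ht
    cases t with
    | zero =>
      have : w 0 - v 0 = 0 := by simp [hv]
      rw [this, hN0']
      exact Real.sqrt_nonneg _
    | succ s =>
      have hs : s < T := Nat.lt_of_succ_lt ht
      obtain ⟨hwK, hwin⟩ := hstep s hs
      have h1 := hkey (s+1) (w (s+1)) hwK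
      have h2 := hwin (v (s+1)) (hvK (s+1))
      apply hsq
      simp only [hf] at h1 h2
      nlinarith
  -- stability of exact minimizers
  have hstab : ∀ t, N (v t - v (t+1)) ≤ η := by
    intro t
    set a := v t
    set b := v (t+1)
    have h1 := hkey t b (hvK (t+1))
    have h2 := hkey (t+1) a (hvK t)
    have hsucc : ∀ x : Fin d → ℝ, f (t+1) x = f t x + η * dot (ℓ t) x := by
      intro x
      simp only [hf, Finset.sum_range_succ]
      ring
    have hNab : N (b - a) = N (a - b) := by
      rw [show b - a = -(a - b) by ring, hNneg]
    have hpb : dot (ℓ t) (a - b) ≤ N (a - b) := hpair t _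
    have hdab : dot (ℓ t) (a - b) = dot (ℓ t) a - dot (ℓ t) b := hdsub _ _ _
    rw [hsucc a, hsucc b] at h2
    rw [hNab] at h1
    by_cases h0 : N (a - b) = 0
    · rw [h0]; exact le_of_lt hη
    · have hpos : 0 < N (a - b) := lt_of_le_of_ne (hNnn _) (Ne.symm h0)
      nlinarith
  -- be-the-leader
  have hBTL : ∀ n, ∀ u ∈ K,
      η * (∑ t ∈ Finset.range n, dot (ℓ t) (v (t+1))) + R (v 0) ≤ f n u := by
    intro n
    induction n with
    | zero =>
      intro u hu
      simpa [hf, show v 0 = w 0 from rfl] using hw0 u hu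
    | succ m ih =>
      intro u hu
      have h1 := ih (v (m+1)) (hvK (m+1))
      have h2 := hvmin (m+1) u hu
      simp only [hf, Finset.sum_range_succ] at *
      nlinarith
  -- assemble
  have hw0v : v 0 = w 0 := rfl
  have hsplit : ∀ t, dot (ℓ t) (w t) - dot (ℓ t) wstar =
      (dot (ℓ t) (w t) - dot (ℓ t) (v t)) + (dot (ℓ t) (v t) - dot (ℓ t) (v (t+1)))
        + (dot (ℓ t) (v (t+1)) - dot (ℓ t) wstar) := by intro t; ring
  have hS1 : ∑ t ∈ Finset.range T, (dot (ℓ t) (w t) - dot (ℓ t) (v t))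
      ≤ T * Real.sqrt (2*ε) := by
    calc ∑ t ∈ Finset.range T, (dot (ℓ t) (w t) - dot (ℓ t) (v t))
        ≤ ∑ t ∈ Finset.range T, Real.sqrt (2*ε) := by
          refine Finset.sum_le_sum fun t ht => ?_
          rw [← hdsub]
          exact le_trans (hpair t _) (hclose t (Finset.mem_range.mp ht))
      _ = T * Real.sqrt (2*ε) := by
          rw [Finset.sum_const, Finset.card_range, nsmul_eq_mul]
  have hS2 : ∑ t ∈ Finset.range T, (dot (ℓ t) (v t) - dot (ℓ t) (v (t+1)))
      ≤ T * η := by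
    calc ∑ t ∈ Finset.range T, (dot (ℓ t) (v t) - dot (ℓ t) (v (t+1)))
        ≤ ∑ t ∈ Finset.range T, η := by
          refine Finset.sum_le_sum fun t _ => ?_
          rw [← hdsub]
          exact le_trans (hpair t _) (hstab t)
      _ = T * η := by rw [Finset.sum_const, Finset.card_range, nsmul_eq_mul]
  have hS3 : ∑ t ∈ Finset.range T, (dot (ℓ t) (v (t+1)) - dot (ℓ t) wstar)
      ≤ (R wstar - R (w 0)) / η := by
    have h1 := hBTL T wstar hws
    simp only [hf, hw0v] at h1
    rw [Finset.sum_sub_distrib, le_div_iff₀ hη]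
    nlinarith
  have hT0 : (0:ℝ) ≤ η * T := by positivity
  calc ∑ t ∈ Finset.range T, (dot (ℓ t) (w t) - dot (ℓ t) wstar)
      = ∑ t ∈ Finset.range T, ((dot (ℓ t) (w t) - dot (ℓ t) (v t))
          + (dot (ℓ t) (v t) - dot (ℓ t) (v (t+1)))
          + (dot (ℓ t) (v (t+1)) - dot (ℓ t) wstar)) :=
        Finset.sum_congr rfl fun t _ => hsplit t
    _ = (∑ t ∈ Finset.range T, (dot (ℓ t) (w t) - dot (ℓ t) (v t)))
          + (∑ t ∈ Finset.range T, (dot (ℓ t) (v t) - dot (ℓ t) (v (t+1))))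
          + ∑ t ∈ Finset.range T, (dot (ℓ t) (v (t+1)) - dot (ℓ t) wstar) := by
        rw [Finset.sum_add_distrib, Finset.sum_add_distrib]
    _ ≤ (R wstar - R (w 0)) / η + (2*η + Real.sqrt (2*ε)) * T := by
        nlinarith [hS1, hS2, hS3, hT0]

end
end
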